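/- Suppose gcd(T, q) = 1, T ≥ 2, and f over GF(q) of degree r with f(0) = 1 has period set {1, T}, with f = (1-x)^{d_0}·g_1···g_l as in the structure theorem. Then the q^r states decompose into cycles under the recurrence transition map as follows: there are N = (q^r - q^{d_0})/T cycles of length T and q^{d_0} fixed points (cycles of length 1). -/

import Mathlib

/-!
Let `f` be the feedback polynomial and `g = f.mirror` the characteristic polynomial of the
linear transition map `L`, so that `g(L) = 0`. Every divisor of `f` has order `1` or `T`,
hence `f ∣ X^T - 1`, so `g ∣ X^T - 1` and `L^T = 1`. If `L^k s = s` with `0 < k < T`, then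
`s` is killed by `p = gcd(X^k - 1, g)`; the mirror of `p` divides both `f` and `X^k - 1`, so
its order is `1`, i.e. `p ∣ X - 1` and `L s = s`. Thus every state is fixed or has exact
period `T`, and the non-fixed states split into `T`-cycles. The fixed states are the constant
states `β` with `(1 - ∑ cᵢ) β = 0`: there are `q` of them if `(1 - X) ∣ f`, and one
otherwise.
-/

open Polynomial

/-- The order of a polynomial `g` (with `g(0) ≠ 0`): the least `j ≥ 1` with `g ∣ x^j - 1`. -/
noncomputable def polyOrd {F : Type*} [Field F] (g : Polynomial F) : ℕ :=
  sInf {j : ℕ | 1 ≤ j ∧ g ∣ X ^ j - 1}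

/-- The period set of `f`: the orders of all nonzero divisors of `f` with nonzero
constant term. -/
noncomputable def periodSet {F : Type*} [Field F] (f : Polynomial F) : Set ℕ :=
  {t : ℕ | ∃ g : Polynomial F, g ∣ f ∧ g ≠ 0 ∧ g.coeff 0 ≠ 0 ∧ t = polyOrd g}

/-- The transition map of the linear recurrence. -/
def nextState {F : Type*} [Field F] {r : ℕ} (c : ℕ → F) (s : Fin r → F) : Fin r → F :=
  fun j => if h : (j : ℕ) + 1 < r then s ⟨(j : ℕ) + 1, h⟩
    else ∑ i ∈ Finset.range r, c i * s ⟨r - 1 - i, by have := j.isLt; omega⟩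

/-- The least period of a state `s` under the transition map. -/
noncomputable def stateCycleLen {F : Type*} [Field F] {r : ℕ} (c : ℕ → F)
    (s : Fin r → F) : ℕ :=
  sInf {k : ℕ | 1 ≤ k ∧ (nextState c)^[k] s = s}

open Function

namespace Function

variable {α : Type*} {φ : α → α} {T : ℕ}

theorem minimalPeriod_eq_of_not_isFixedPt {x : α} (hT : 0 < T) (hx : IsPeriodicPt φ T x)
    (hmin : ∀ k, 0 < k → k < T → IsPeriodicPt φ k x → IsFixedPt φ x)
    (hfix : ¬IsFixedPt φ x) : minimalPeriod φ x = T := by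
  have hpos : 0 < minimalPeriod φ x := hx.minimalPeriod_pos hT
  refine (hx.minimalPeriod_le hT).antisymm (not_lt.mp fun hlt => hfix ?_)
  exact hmin _ hpos hlt (isPeriodicPt_minimalPeriod φ x)

theorem setOf_minimalPeriod_eq (hT : T ≠ 1)
    (hper : ∀ x, ¬IsFixedPt φ x → minimalPeriod φ x = T) :
    {x | minimalPeriod φ x = T} = {x | ¬IsFixedPt φ x} := by
  ext x
  by_cases hx : IsFixedPt φ x
  · simp [minimalPeriod_eq_one_iff_isFixedPt.mpr hx, hx, Ne.symm hT]
  · simp [hper x hx, hx]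

theorem dvd_ncard_setOf_not_isFixedPt [Finite α] (hT : 0 < T)
    (hφ : ∀ x, IsPeriodicPt φ T x) (hper : ∀ x, ¬IsFixedPt φ x → minimalPeriod φ x = T) :
    T ∣ {x | ¬IsFixedPt φ x}.ncard := by
  classical
  have : Fintype α := Fintype.ofFinite α
  have hinj : Injective φ := by
    refine LeftInverse.injective (g := φ^[T - 1]) fun x => ?_
    rw [← iterate_succ_apply, Nat.succ_eq_add_one, Nat.sub_add_cancel hT]
    exact hφ x
  set σ : Equiv.Perm α := Equiv.ofBijective φ (Finite.injective_iff_bijective.mp hinj)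
  have hsupp : {x | ¬IsFixedPt φ x} = ↑σ.support := by
    rw [Equiv.Perm.coe_support_eq_set_support]; rfl
  rw [hsupp, Set.ncard_coe_finset, ← Equiv.Perm.sum_cycleType, Equiv.Perm.cycleType_def]
  -- each cycle of `σ` has a length that is a period of its points, hence a multiple of `T`
  refine Multiset.dvd_sum fun m hm => ?_
  obtain ⟨τ, hτ, rfl⟩ := Multiset.mem_map.mp hm
  obtain ⟨a, ha⟩ := (Equiv.Perm.mem_cycleFactorsFinset_iff.mp hτ).1.nonempty_support
  rw [comp_apply, Equiv.Perm.cycle_is_cycleOf ha hτ]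
  have hperiod : IsPeriodicPt φ (σ.cycleOf a).support.card a := by
    have := σ.pow_mod_card_support_cycleOf_self_apply (σ.cycleOf a).support.card a
    rw [Nat.mod_self, pow_zero, Equiv.Perm.one_apply, Equiv.Perm.coe_pow] at this
    exact this.symm
  have hfix : ¬IsFixedPt φ a :=
    Equiv.Perm.mem_support.mp (Equiv.Perm.mem_cycleFactorsFinset_support_le hτ ha)
  exact hper a hfix ▸ hperiod.minimalPeriod_dvd

end Function

namespace Polynomial

section Mirror

variable {R : Type*} [Ring R]

theorem mirror_dvd_mirror [NoZeroDivisors R] {p q : R[X]} (h : p ∣ q) :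
    p.mirror ∣ q.mirror := by
  obtain ⟨u, rfl⟩ := h
  exact ⟨u.mirror, mirror_mul_of_domain p u⟩

theorem mirror_X_pow_sub_one [Nontrivial R] (k : ℕ) :
    (X ^ k - 1 : R[X]).mirror = -(X ^ k - 1) := by
  rcases Nat.eq_zero_or_pos k with rfl | hk
  · simp
  have htrail : (X ^ k - 1 : R[X]).natTrailingDegree = 0 :=
    natTrailingDegree_eq_zero.mpr (Or.inr (by simp [coeff_X_pow, hk.ne]))
  have hrev : (X ^ k : R[X]).reverse = 1 := by
    rw [← one_mul (X ^ k), reverse_mul_X_pow, ← C_1, reverse_C]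
  rw [mirror, htrail, pow_zero, mul_one, sub_eq_add_neg, ← C_1, ← C_neg, reverse_add_C, hrev,
    natDegree_X_pow]
  simp only [C_neg, C_1]
  noncomm_ring

theorem mirror_dvd_X_pow_sub_one [NoZeroDivisors R] [Nontrivial R] {p : R[X]} {k : ℕ}
    (h : p ∣ X ^ k - 1) : p.mirror ∣ X ^ k - 1 := by
  simpa only [mirror_X_pow_sub_one, dvd_neg] using mirror_dvd_mirror h

end Mirror

end Polynomial

theorem Module.End.aeval_apply_eq_zero_of_forall_dvd {K V : Type*} [Field K] [AddCommGroup V]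
    [Module K V] (φ : Module.End K V) {a b d : K[X]} {v : V} (ha : aeval φ a v = 0)
    (hb : aeval φ b v = 0) (hd : ∀ p : K[X], p ∣ a → p ∣ b → p ∣ d) :
    aeval φ d v = 0 := by
  classical
  have hgcd : aeval φ (EuclideanDomain.gcd a b) v = 0 := by
    rw [EuclideanDomain.gcd_eq_gcd_ab, mul_comm a, mul_comm b, map_add, map_mul, map_mul,
      LinearMap.add_apply, Module.End.mul_apply, Module.End.mul_apply, ha, hb, map_zero,
      map_zero, add_zero]
  obtain ⟨e, he⟩ := hd _ (EuclideanDomain.gcd_dvd_left a b) (EuclideanDomain.gcd_dvd_right a b)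
  rw [he, mul_comm, map_mul, Module.End.mul_apply, hgcd, map_zero]

theorem setOf_mul_eq_self_of_ne_one {K : Type*} [Field K] {a : K} (ha : a ≠ 1) :
    {β : K | a * β = β} = {0} := by
  ext β
  simp [← sub_eq_zero (a := a * β), ← sub_one_mul, sub_eq_zero, ha]

section PeriodSet

variable {F : Type*} [Field F] {f p : F[X]} {T k : ℕ}

theorem dvd_X_pow_polyOrd_sub_one (h : 0 < polyOrd p) : p ∣ X ^ polyOrd p - 1 :=
  (Nat.sInf_mem (Nat.nonempty_of_pos_sInf h)).2

theorem dvd_X_pow_sub_one_of_periodSet_subset (hf : f ≠ 0) (hf0 : f.coeff 0 ≠ 0)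
    (hper : periodSet f ⊆ {1, T}) : f ∣ X ^ T - 1 := by
  have hmem : polyOrd f ∈ ({1, T} : Set ℕ) := hper ⟨f, dvd_rfl, hf, hf0, rfl⟩
  obtain ⟨n, hn⟩ : polyOrd f ∣ T := by
    rcases hmem with h | h
    · exact h ▸ one_dvd T
    · exact (Set.mem_singleton_iff.mp h) ▸ dvd_rfl
  rcases Nat.eq_zero_or_pos (polyOrd f) with h0 | hpos
  · rw [hn, h0, zero_mul, pow_zero, sub_self]
    exact dvd_zero f
  · exact hn ▸ (dvd_X_pow_polyOrd_sub_one hpos).trans (pow_one_sub_dvd_pow_mul_sub_one X _ _)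

theorem dvd_X_sub_one_of_periodSet_subset (hper : periodSet f ⊆ {1, T}) (hpf : p ∣ f)
    (hk : 0 < k) (hkT : k < T) (hpk : p ∣ X ^ k - 1) : p ∣ X - 1 := by
  have hXk : (X ^ k - 1 : F[X]) ≠ 0 := by simpa using X_pow_sub_C_ne_zero hk (1 : F)
  have hp0 : p.coeff 0 ≠ 0 := fun h => by
    have := (X_dvd_iff.mpr h).trans hpk
    simp [X_dvd_iff, coeff_X_pow, hk.ne] at this
  have hmem : polyOrd p ∈ ({1, T} : Set ℕ) :=
    hper ⟨p, hpf, ne_zero_of_dvd_ne_zero hXk hpk, hp0, rfl⟩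
  have hle : polyOrd p ≤ k := Nat.sInf_le ⟨hk, hpk⟩
  have hord : polyOrd p = 1 := by
    simp only [Set.mem_insert_iff, Set.mem_singleton_iff] at hmem
    omega
  simpa [hord] using dvd_X_pow_polyOrd_sub_one (hord ▸ one_pos : 0 < polyOrd p)

theorem dvd_X_sub_one_of_dvd_mirror (hper : periodSet f ⊆ {1, T}) (hpf : p ∣ f.mirror)
    (hk : 0 < k) (hkT : k < T) (hpk : p ∣ X ^ k - 1) : p ∣ X - 1 := by
  have h := dvd_X_sub_one_of_periodSet_subset hper (mirror_mirror f ▸ mirror_dvd_mirror hpf)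
    hk hkT (mirror_dvd_X_pow_sub_one hpk)
  rw [← pow_one X] at h ⊢
  exact mirror_mirror p ▸ mirror_dvd_X_pow_sub_one h

end PeriodSet

section Recurrence

variable {F : Type*} [Field F]

noncomputable def feedbackPoly (c : ℕ → F) (r : ℕ) : F[X] :=
  1 - ∑ i ∈ Finset.range r, C (c i) * X ^ (i + 1)

noncomputable def recurrencePoly (c : ℕ → F) (r : ℕ) : F[X] :=
  X ^ r - ∑ i ∈ Finset.range r, C (c i) * X ^ (r - 1 - i)

variable {r : ℕ} (c : ℕ → F)

theorem coeff_feedbackPoly (n : ℕ) :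
    (feedbackPoly c r).coeff n = if n = 0 then 1 else if n ≤ r then -c (n - 1) else 0 := by
  simp only [feedbackPoly, coeff_sub, coeff_one, finsetSum_coeff, coeff_C_mul_X_pow]
  rcases Nat.eq_zero_or_pos n with rfl | hn
  · simp
  by_cases hnr : n ≤ r
  · rw [Finset.sum_eq_single (n - 1) (fun i _ hi => if_neg (by omega))
      (fun h => absurd (Finset.mem_range.mpr (by omega)) h)]
    simp [hnr, hn.ne', Nat.sub_add_cancel hn]
  · rw [Finset.sum_eq_zero fun i hi => if_neg (by simp at hi; omega)]
    simp [hnr, hn.ne']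

theorem natDegree_feedbackPoly (hc : c (r - 1) ≠ 0) : (feedbackPoly c r).natDegree = r := by
  refine natDegree_eq_of_le_of_coeff_ne_zero ?_ ?_
  · exact natDegree_le_iff_coeff_eq_zero.mpr fun n hn => by
      rw [coeff_feedbackPoly, if_neg (by omega), if_neg (by omega)]
  · rw [coeff_feedbackPoly]
    split_ifs <;> simp_all

theorem mirror_feedbackPoly (hc : c (r - 1) ≠ 0) :
    (feedbackPoly c r).mirror = recurrencePoly c r := by
  have htrail : (feedbackPoly c r).natTrailingDegree = 0 :=
    natTrailingDegree_eq_zero.mpr (Or.inr (by simp [coeff_feedbackPoly]))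
  have hsum : reflect r (∑ i ∈ Finset.range r, C (c i) * X ^ (i + 1)) =
      ∑ i ∈ Finset.range r, reflect r (C (c i) * X ^ (i + 1)) :=
    map_sum (AddMonoidHom.mk' (reflect (R := F) r) fun p q => reflect_add p q r)
      (fun i => C (c i) * X ^ (i + 1)) (Finset.range r)
  rw [mirror, htrail, pow_zero, mul_one, reverse, natDegree_feedbackPoly c hc, feedbackPoly,
    reflect_sub, reflect_one, hsum, recurrencePoly]
  congr 1
  refine Finset.sum_congr rfl fun i hi => ?_
  rw [reflect_C_mul_X_pow, revAt_le (by simp at hi; omega)]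
  congr 2
  omega

theorem eval_one_feedbackPoly : (feedbackPoly c r).eval 1 = 1 - ∑ i ∈ Finset.range r, c i := by
  simp [feedbackPoly, eval_finsetSum]

theorem one_sub_X_dvd_feedbackPoly_iff :
    (1 - X : F[X]) ∣ feedbackPoly c r ↔ ∑ i ∈ Finset.range r, c i = 1 := by
  rw [← neg_sub, neg_dvd, ← C_1, dvd_iff_isRoot, IsRoot, eval_one_feedbackPoly, sub_eq_zero,
    eq_comm]

end Recurrence

section NextState

variable {F : Type*} [Field F] {r : ℕ} (c : ℕ → F)

def nextStateLin : Module.End F (Fin r → F) where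
  toFun := nextState c
  map_add' s t := by
    funext j
    simp only [nextState, Pi.add_apply]
    split_ifs
    · rfl
    · simp only [mul_add, Finset.sum_add_distrib]
  map_smul' a s := by
    funext j
    simp only [nextState, Pi.smul_apply, smul_eq_mul, RingHom.id_apply]
    split_ifs
    · rfl
    · simp only [Finset.mul_sum, mul_left_comm]

theorem nextStateLin_pow_apply (n : ℕ) (s : Fin r → F) :
    (nextStateLin c ^ n) s = (nextState c)^[n] s :=
  Module.End.pow_apply _ n s

theorem iterate_nextState_apply (s : Fin r → F) (n : ℕ) (j : Fin r) :
    (nextState c)^[n] s j = (nextState c)^[n + j] s ⟨0, j.pos⟩ := by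
  obtain ⟨j, hj⟩ := j
  induction j generalizing n with
  | zero => rfl
  | succ j ih =>
    have hstep :
        (nextState c)^[n] s ⟨j + 1, hj⟩ = (nextState c)^[n + 1] s ⟨j, by omega⟩ := by
      rw [iterate_succ_apply', nextState, dif_pos hj]
    rw [hstep, ih (n + 1) (by omega)]
    simp only [add_assoc, add_comm 1]

theorem iterate_nextState_add_apply_zero (hr : 0 < r) (s : Fin r → F) (n : ℕ) :
    (nextState c)^[n + r] s ⟨0, hr⟩ =
      ∑ i ∈ Finset.range r, c i * (nextState c)^[n + (r - 1 - i)] s ⟨0, hr⟩ := by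
  have hlast := iterate_nextState_apply c s (n + 1) ⟨r - 1, by omega⟩
  rw [iterate_succ_apply', nextState, dif_neg (by simp; omega)] at hlast
  simp only [add_assoc, add_comm 1, Nat.sub_add_cancel hr] at hlast
  rw [← hlast]
  exact Finset.sum_congr rfl fun i _ => by rw [iterate_nextState_apply]

theorem aeval_nextStateLin_recurrencePoly :
    aeval (nextStateLin (r := r) c) (recurrencePoly c r) = 0 := by
  refine LinearMap.ext fun s => funext fun j => ?_
  have hr : 0 < r := j.pos
  simp only [recurrencePoly, map_sub, map_pow, aeval_X, map_sum, map_mul, aeval_C,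
    LinearMap.sub_apply, LinearMap.sum_apply, Module.End.mul_apply,
    Module.algebraMap_end_apply, nextStateLin_pow_apply, Pi.sub_apply, Finset.sum_apply,
    Pi.smul_apply, smul_eq_mul, LinearMap.zero_apply, Pi.zero_apply]
  rw [iterate_nextState_apply, add_comm r, iterate_nextState_add_apply_zero c hr, sub_eq_zero]
  exact Finset.sum_congr rfl fun i _ => by
    rw [iterate_nextState_apply c s (r - 1 - i) j, Nat.add_comm j.val]

theorem aeval_nextStateLin_X_pow_sub_one_apply (k : ℕ) (s : Fin r → F) :
    aeval (nextStateLin c) (X ^ k - 1 : F[X]) s = (nextState c)^[k] s - s := by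
  simp [nextStateLin_pow_apply]

end NextState

section NextStateDynamics

variable {F : Type*} [Field F] {r : ℕ} (c : ℕ → F) {T : ℕ}

theorem stateCycleLen_eq_minimalPeriod :
    stateCycleLen (r := r) c = minimalPeriod (nextState c) := by
  funext s
  by_cases hs : s ∈ periodicPts (nextState c)
  · have hne : {k : ℕ | 1 ≤ k ∧ (nextState c)^[k] s = s}.Nonempty := by
      obtain ⟨n, hn, hsn⟩ := hs
      exact ⟨n, hn, hsn⟩
    obtain ⟨hpos, hper⟩ := Nat.sInf_mem hne
    have hmem : minimalPeriod (nextState c) s ∈ {k : ℕ | 1 ≤ k ∧ (nextState c)^[k] s = s} :=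
      ⟨minimalPeriod_pos_of_mem_periodicPts hs, isPeriodicPt_minimalPeriod _ _⟩
    exact (Nat.sInf_le hmem).antisymm (IsPeriodicPt.minimalPeriod_le hpos hper)
  · have hempty : {k : ℕ | 1 ≤ k ∧ (nextState c)^[k] s = s} = ∅ :=
      Set.eq_empty_of_forall_notMem fun k hk => hs ⟨k, hk.1, hk.2⟩
    rw [minimalPeriod_eq_zero_of_notMem_periodicPts hs, stateCycleLen, hempty, Nat.sInf_empty]

theorem isPeriodicPt_nextState (hc : c (r - 1) ≠ 0)
    (hper : periodSet (feedbackPoly c r) ⊆ {1, T}) (s : Fin r → F) :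
    IsPeriodicPt (nextState c) T s := by
  have hf : feedbackPoly c r ∣ X ^ T - 1 := by
    refine dvd_X_pow_sub_one_of_periodSet_subset (fun h => ?_) (by simp [coeff_feedbackPoly]) hper
    simpa [h] using coeff_feedbackPoly c (r := r) 0
  obtain ⟨u, hu⟩ := mirror_feedbackPoly c hc ▸ mirror_dvd_X_pow_sub_one hf
  have h := aeval_nextStateLin_X_pow_sub_one_apply c T s
  rwa [hu, map_mul, aeval_nextStateLin_recurrencePoly, zero_mul, LinearMap.zero_apply, eq_comm,
    sub_eq_zero] at h

theorem isFixedPt_nextState_of_isPeriodicPt (hc : c (r - 1) ≠ 0)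
    (hper : periodSet (feedbackPoly c r) ⊆ {1, T}) {k : ℕ} (hk : 0 < k) (hkT : k < T)
    {s : Fin r → F} (hs : IsPeriodicPt (nextState c) k s) :
    IsFixedPt (nextState c) s := by
  have h : aeval (nextStateLin c) (X ^ 1 - 1 : F[X]) s = 0 := by
    refine (nextStateLin c).aeval_apply_eq_zero_of_forall_dvd (a := X ^ k - 1)
      (b := recurrencePoly c r) ?_ ?_ fun p hpk hpg => ?_
    · rw [aeval_nextStateLin_X_pow_sub_one_apply, hs.eq, sub_self]
    · rw [aeval_nextStateLin_recurrencePoly, LinearMap.zero_apply]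
    · rw [pow_one]
      exact dvd_X_sub_one_of_dvd_mirror hper (mirror_feedbackPoly c hc ▸ hpg) hk hkT hpk
  rwa [aeval_nextStateLin_X_pow_sub_one_apply, sub_eq_zero] at h

theorem isFixedPt_nextState_iff (hr : 0 < r) {s : Fin r → F} :
    IsFixedPt (nextState c) s ↔
      ∃ β, (∑ i ∈ Finset.range r, c i) * β = β ∧ (fun _ => β) = s := by
  constructor
  · intro hs
    have hconst : ∀ j : Fin r, s j = s ⟨0, hr⟩ := fun j => by
      simpa [(hs.iterate j.val).eq] using iterate_nextState_apply c s 0 j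
    refine ⟨s ⟨0, hr⟩, ?_, funext fun j => (hconst j).symm⟩
    have hlast := iterate_nextState_add_apply_zero c hr s 0
    simp only [zero_add, (hs.iterate _).eq] at hlast
    rw [Finset.sum_mul, ← hlast]
  · rintro ⟨β, hβ, rfl⟩
    funext j
    simp only [nextState]
    split_ifs
    · rfl
    · rw [← Finset.sum_mul, hβ]

theorem ncard_fixedPoints_nextState (hr : 0 < r) :
    {s : Fin r → F | IsFixedPt (nextState c) s}.ncard =
      {β : F | (∑ i ∈ Finset.range r, c i) * β = β}.ncard := by
  have himage : {s : Fin r → F | IsFixedPt (nextState c) s} =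
      (fun β _ => β) '' {β : F | (∑ i ∈ Finset.range r, c i) * β = β} := by
    ext s
    exact isFixedPt_nextState_iff c hr
  rw [himage, Set.ncard_image_of_injective _ fun a b h => congrFun h ⟨0, hr⟩]

theorem ncard_fixedPoints_nextState_of_dvd (hr : 0 < r)
    (h : (1 - X : F[X]) ∣ feedbackPoly c r) :
    {s : Fin r → F | IsFixedPt (nextState c) s}.ncard = Nat.card F := by
  simp [ncard_fixedPoints_nextState c hr, (one_sub_X_dvd_feedbackPoly_iff c).mp h, Set.ncard_univ]

theorem ncard_fixedPoints_nextState_of_not_dvd (hr : 0 < r)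
    (h : ¬(1 - X : F[X]) ∣ feedbackPoly c r) :
    {s : Fin r → F | IsFixedPt (nextState c) s}.ncard = 1 := by
  rw [ncard_fixedPoints_nextState c hr,
    setOf_mul_eq_self_of_ne_one ((one_sub_X_dvd_feedbackPoly_iff c).not.mp h), Set.ncard_singleton]

end NextStateDynamics

theorem stmt_17_general {F : Type*} [Field F] [Fintype F] (q : ℕ) (hq : q = Fintype.card F)
    (r : ℕ) (hr : 0 < r) (c : ℕ → F) (hc : c (r - 1) ≠ 0)
    (T : ℕ) (hT : 2 ≤ T)
    (hper : periodSet (1 - ∑ i ∈ Finset.range r, C (c i) * X ^ (i + 1)) = {1, T})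
    (d₀ : ℕ) (hd₀ : d₀ ≤ 1)
    (hdvd : (1 - X : Polynomial F) ^ d₀ ∣ 1 - ∑ i ∈ Finset.range r, C (c i) * X ^ (i + 1))
    (hndvd : ¬ (1 - X : Polynomial F) ^ (d₀ + 1) ∣
      1 - ∑ i ∈ Finset.range r, C (c i) * X ^ (i + 1)) :
    {s : Fin r → F | stateCycleLen c s = 1}.ncard = q ^ d₀ ∧
    {s : Fin r → F | stateCycleLen c s = T}.ncard = q ^ r - q ^ d₀ ∧
    T ∣ q ^ r - q ^ d₀ := by
  have hperT : periodSet (feedbackPoly c r) ⊆ {1, T} := hper.le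
  have hperiodic := isPeriodicPt_nextState c hc hperT
  have hmin (s : Fin r → F) (hs : ¬IsFixedPt (nextState c) s) :
      minimalPeriod (nextState c) s = T :=
    minimalPeriod_eq_of_not_isFixedPt (by omega) (hperiodic s)
      (fun _ hk hkT => isFixedPt_nextState_of_isPeriodicPt c hc hperT hk hkT) hs
  have hfix : {s : Fin r → F | IsFixedPt (nextState c) s}.ncard = q ^ d₀ := by
    interval_cases d₀
    · exact ncard_fixedPoints_nextState_of_not_dvd c hr (by simpa [feedbackPoly] using hndvd)
    · simpa [hq] using ncard_fixedPoints_nextState_of_dvd c hr (by simpa [feedbackPoly] using hdvd)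
  have hnotfix : {s : Fin r → F | ¬IsFixedPt (nextState c) s}.ncard = q ^ r - q ^ d₀ := by
    have hsum := Set.ncard_add_ncard_compl {s : Fin r → F | IsFixedPt (nextState c) s}
    rw [Set.compl_ofPred, hfix, Nat.card_eq_fintype_card, Fintype.card_fun, Fintype.card_fin,
      ← hq] at hsum
    omega
  rw [stateCycleLen_eq_minimalPeriod, setOf_minimalPeriod_eq (by omega) hmin]
  simp only [minimalPeriod_eq_one_iff_isFixedPt]
  exact ⟨hfix, hnotfix, hnotfix ▸ dvd_ncard_setOf_not_isFixedPt (by omega) hperiodic hmin⟩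

/-- Cycle decomposition for a biperiodic recurrence: if `gcd(T, q) = 1`, `T ≥ 2`, and the
characteristic polynomial `f = 1 - ∑_{i=1}^r c_i x^i` has period set `{1, T}` with
`d₀ ∈ {0,1}` the multiplicity of `(1-x)` in `f`, then there are exactly `q^{d₀}` fixed
points, the remaining `q^r - q^{d₀}` states lie on cycles of length `T`, and
`T ∣ q^r - q^{d₀}` (so there are `N = (q^r - q^{d₀})/T` cycles of length `T`). -/
theorem stmt_17 {F : Type*} [Field F] [Fintype F] (q : ℕ) (hq : q = Fintype.card F)
    (r : ℕ) (hr : 0 < r) (c : ℕ → F) (hc : c (r - 1) ≠ 0)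
    (T : ℕ) (hT : 2 ≤ T) (hcop : Nat.Coprime T q)
    (hper : periodSet (1 - ∑ i ∈ Finset.range r, C (c i) * X ^ (i + 1)) = {1, T})
    (d₀ : ℕ) (hd₀ : d₀ ≤ 1)
    (hdvd : (1 - X : Polynomial F) ^ d₀ ∣ 1 - ∑ i ∈ Finset.range r, C (c i) * X ^ (i + 1))
    (hndvd : ¬ (1 - X : Polynomial F) ^ (d₀ + 1) ∣
      1 - ∑ i ∈ Finset.range r, C (c i) * X ^ (i + 1)) :
    {s : Fin r → F | stateCycleLen c s = 1}.ncard = q ^ d₀ ∧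
    {s : Fin r → F | stateCycleLen c s = T}.ncard = q ^ r - q ^ d₀ ∧
    T ∣ q ^ r - q ^ d₀ :=
  stmt_17_general q hq r hr c hc T hT hper d₀ hd₀ hdvd hndvd
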